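/- Let f(z) = (zq;q)_m (z^{−1}q;q)_n be viewed as a Laurent polynomial in z over ℤ[q]. Then the Laurent polynomial identity (1 − z^{−1}) f(z) = Σ_{k=−n−1}^{m} (−1)^k q^{binom(k+1,2)} z^k [m+n+1 choose n+1+k]_q holds; consequently, evaluating the z-derivative of both sides at z = 1 yields f(1) = Σ_{k=−n−1}^{m} (−1)^k k q^{binom(k+1,2)} [m+n+1 choose n+1+k]_q. -/

import Mathlib

open Finset

/-- The q-shifted factorial `(q;q)_r = ∏_{i=1}^r (1 - q^i)` in `ℚ(q)`. -/
noncomputable def qPoch (r : ℕ) : RatFunc ℚ :=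
  ∏ i ∈ Finset.range r, (1 - (RatFunc.X : RatFunc ℚ) ^ (i + 1))

/-- The Gaussian binomial coefficient `[a choose b]_q`, zero outside `0 ≤ b ≤ a`. -/
noncomputable def qbinom (a : ℕ) (b : ℤ) : RatFunc ℚ :=
  if 0 ≤ b ∧ b ≤ (a : ℤ) then qPoch a / (qPoch b.toNat * qPoch (a - b.toNat)) else 0

/-!
Pulling `-z q^(i+1)` out of each factor of `(zq;q)_m` turns `(1 - z⁻¹) f(z)` into the monomial
`(-z)^m q^C(m+1,2)` times `∏_{i ≤ m+n} (1 + x q^i)` with `x = -(z q^m)⁻¹`. The q-binomial theorem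
expands this product as `Σ_j q^C(j,2) [m+n+1, j] x^j`, and the substitution `k = m - j` together
with the symmetry of the Gaussian binomials gives MacMahon's sum.

For the second identity note that `z^n f(z)` is a polynomial, so clearing denominators makes
`(1 - z⁻¹) f(z) = Σ c_k z^k` a polynomial identity. Differentiating it at `z = 1`, where `1 - z⁻¹`
vanishes and hence `Σ c_k = 0`, gives `f(1) = Σ k c_k`.
-/

section LaurentDerivative

open Polynomial

/- Here `f = R / z ^ N` is a Laurent polynomial in `z`, and the conclusion is the derivative of
both sides at `z = 1`. -/
theorem eval_one_eq_sum_mul_of_one_sub_inv_mul_eq {K : Type*} [Field K] [Infinite K] (R : K[X])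
    (N : ℕ) (s : Finset ℤ) (c : ℤ → K)
    (h : ∀ z : K, z ≠ 0 → (1 - z⁻¹) * (R.eval z / z ^ N) = ∑ k ∈ s, c k * z ^ k) :
    R.eval 1 = ∑ k ∈ s, c k * k := by
  set L := ∑ k ∈ s, (-k).toNat
  set M : ℤ := N + 1 + L
  have hM : ∀ k ∈ s, 0 ≤ M + k := fun k hk => by
    have := single_le_sum (f := fun k : ℤ => (-k).toNat) (fun _ _ => Nat.zero_le _) hk
    omega
  set Q : K[X] := ∑ k ∈ s, C (c k) * X ^ (M + k).toNat
  have hsum : ∑ k ∈ s, c k = 0 := by simpa using (h 1 one_ne_zero).symm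
  -- `M` is large enough that multiplying by `z ^ M` clears all negative powers of `z`.
  have hPQ : (X - 1) * (X ^ L * R) = Q := by
    refine eq_of_infinite_eval_eq _ _ ((Set.finite_singleton 0).infinite_compl.mono fun z hz => ?_)
    have hz : z ≠ 0 := hz
    have hzM : z ^ M = z ^ (N + 1 + L) := by rw [← zpow_natCast]; push_cast; rfl
    calc eval z ((X - 1) * (X ^ L * R)) = (1 - z⁻¹) * (R.eval z / z ^ N) * z ^ M := by
          rw [hzM]; simp only [eval_mul, eval_sub, eval_X, eval_one, eval_pow]; field_simp; ring
      _ = eval z Q := by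
          simp only [h z hz, sum_mul, Q, eval_finsetSum, eval_mul, eval_C, eval_pow, eval_X]
          refine sum_congr rfl fun k hk => ?_
          rw [mul_assoc, ← zpow_add₀ hz, ← zpow_natCast, Int.toNat_of_nonneg (hM k hk), add_comm]
  have hQ' : (derivative Q).eval 1 = ∑ k ∈ s, c k * (M + k) := by
    simp only [Q, derivative_sum, derivative_C_mul_X_pow, eval_finsetSum]
    refine sum_congr rfl fun k hk => ?_
    rw [eval_mul, eval_C, eval_pow, eval_X, one_pow, mul_one, ← Int.cast_natCast,
      Int.toNat_of_nonneg (hM k hk), Int.cast_add]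
  have hP' : (derivative ((X - 1) * (X ^ L * R))).eval 1 = R.eval 1 := by simp
  rw [← hP', hPQ, hQ']
  simp only [mul_add, sum_add_distrib, ← sum_mul, hsum, zero_mul, zero_add]

end LaurentDerivative

local notation "q" => (RatFunc.X : RatFunc ℚ)

theorem one_sub_X_pow_ne_zero {i : ℕ} (hi : i ≠ 0) : 1 - q ^ i ≠ 0 := by
  rw [← RatFunc.algebraMap_X, ← map_pow, ← map_one (algebraMap (Polynomial ℚ) _), ← map_sub]
  exact (map_ne_zero_iff _ (RatFunc.algebraMap_injective ℚ)).2 fun h => by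
    simpa [hi] using congrArg (Polynomial.eval 0) h

theorem qPoch_ne_zero (r : ℕ) : qPoch r ≠ 0 :=
  prod_ne_zero_iff.2 fun i _ => one_sub_X_pow_ne_zero i.succ_ne_zero

theorem qPoch_zero : qPoch 0 = 1 :=
  prod_range_zero _

theorem qPoch_succ (r : ℕ) : qPoch (r + 1) = qPoch r * (1 - q ^ (r + 1)) :=
  prod_range_succ _ r

theorem qbinom_of_neg (a : ℕ) {b : ℤ} (hb : b < 0) : qbinom a b = 0 :=
  if_neg (by omega)

theorem qbinom_of_lt {a : ℕ} {b : ℤ} (hb : (a : ℤ) < b) : qbinom a b = 0 :=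
  if_neg (by omega)

theorem qbinom_add_eq_div (a b : ℕ) : qbinom (a + b) a = qPoch (a + b) / (qPoch a * qPoch b) := by
  simp [qbinom]

theorem qbinom_zero (a : ℕ) : qbinom a 0 = 1 := by
  simpa [qPoch_zero, div_self (qPoch_ne_zero a)] using qbinom_add_eq_div 0 a

theorem qbinom_self (a : ℕ) : qbinom a a = 1 := by
  simpa [qPoch_zero, div_self (qPoch_ne_zero a)] using qbinom_add_eq_div a 0

theorem qbinom_add_succ_succ (a b : ℕ) :
    qbinom (a + b + 2) (a + 1) =
      qbinom (a + b + 1) (a + 1) + q ^ (b + 1) * qbinom (a + b + 1) a := by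
  have h₁ := qbinom_add_eq_div (a + 1) (b + 1)
  have h₂ := qbinom_add_eq_div (a + 1) b
  have h₃ := qbinom_add_eq_div a (b + 1)
  push_cast at h₁ h₂ h₃
  rw [show a + 1 + (b + 1) = a + b + 2 by ring] at h₁
  rw [show a + 1 + b = a + b + 1 by ring] at h₂
  rw [show a + (b + 1) = a + b + 1 by ring] at h₃
  rw [h₁, h₂, h₃, qPoch_succ (a + b + 1), qPoch_succ a, qPoch_succ b]
  have := qPoch_ne_zero a
  have := qPoch_ne_zero b
  have := one_sub_X_pow_ne_zero a.succ_ne_zero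
  have := one_sub_X_pow_ne_zero b.succ_ne_zero
  field_simp
  ring

theorem qbinom_succ (a : ℕ) (b : ℤ) :
    qbinom (a + 1) b = qbinom a b + q ^ ((a : ℤ) + 1 - b) * qbinom a (b - 1) := by
  rcases lt_trichotomy b 0 with hb | rfl | hb
  · simp [qbinom_of_neg _ hb, qbinom_of_neg _ (show b - 1 < 0 by omega)]
  · simp [qbinom_zero, qbinom_of_neg]
  obtain ⟨c, rfl⟩ : ∃ c : ℕ, b = c + 1 := ⟨b.toNat - 1, by omega⟩
  rcases lt_trichotomy c a with hc | rfl | hc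
  · obtain ⟨d, rfl⟩ : ∃ d, a = c + d + 1 := ⟨a - c - 1, by omega⟩
    have := qbinom_add_succ_succ c d
    push_cast at this ⊢
    rw [show (c + d + 1 : ℤ) + 1 - (c + 1) = (d + 1 : ℕ) by push_cast; ring, zpow_natCast]
    simpa using this
  · simpa [qbinom_of_lt, qbinom_self] using qbinom_self (c + 1)
  · rw [qbinom_of_lt (by omega), qbinom_of_lt (by omega), qbinom_of_lt (by omega)]
    simp

theorem qbinom_symm (a : ℕ) (b : ℤ) : qbinom a (a - b) = qbinom a b := by
  rcases lt_or_ge b 0 with hb | hb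
  · rw [qbinom_of_neg a hb, qbinom_of_lt (by omega)]
  rcases lt_or_ge (a : ℤ) b with hba | hba
  · rw [qbinom_of_lt hba, qbinom_of_neg a (by omega)]
  obtain ⟨c, d, rfl, rfl⟩ : ∃ c d : ℕ, b = c ∧ a = c + d :=
    ⟨b.toNat, a - b.toNat, by omega, by omega⟩
  have h := qbinom_add_eq_div d c
  rw [add_comm d, mul_comm] at h
  push_cast
  rw [add_sub_cancel_left, qbinom_add_eq_div, ← h]

theorem prod_one_add_mul_X_pow (N : ℕ) (x : RatFunc ℚ) :
    ∏ i ∈ range N, (1 + x * q ^ i) = ∑ j ∈ range (N + 1), q ^ j.choose 2 * qbinom N j * x ^ j := by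
  induction N with
  | zero => simp [qbinom_zero]
  | succ N ih =>
    have hq : q ≠ 0 := RatFunc.X_ne_zero
    have hshift : ∀ j ∈ range (N + 1),
        q ^ j.choose 2 * qbinom N j * x ^ j * (x * q ^ N) =
          q ^ (j + 1).choose 2 * q ^ ((N : ℤ) + 1 - (j + 1 : ℕ)) * qbinom N ((j + 1 : ℕ) - 1) *
            x ^ (j + 1) := by
      intro j _
      have hexp :
          q ^ (j + 1).choose 2 * q ^ ((N : ℤ) + 1 - (j + 1 : ℕ)) = q ^ j.choose 2 * q ^ N := by
        rw [Nat.choose_succ_succ', Nat.choose_one_right, ← zpow_natCast, ← zpow_natCast,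
          ← zpow_natCast, ← zpow_add₀ hq, ← zpow_add₀ hq]
        push_cast
        ring_nf
      rw [hexp, Nat.cast_succ, add_sub_cancel_right]
      ring
    have hpascal : ∑ j ∈ range (N + 2), q ^ j.choose 2 * qbinom (N + 1) j * x ^ j =
        ∑ j ∈ range (N + 2), q ^ j.choose 2 * qbinom N j * x ^ j +
          ∑ j ∈ range (N + 2),
            q ^ j.choose 2 * q ^ ((N : ℤ) + 1 - j) * qbinom N (j - 1) * x ^ j := by
      rw [← sum_add_distrib]
      refine sum_congr rfl fun j _ => ?_
      rw [qbinom_succ]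
      ring
    rw [hpascal, sum_range_succ _ (N + 1), sum_range_succ' _ (N + 1), prod_range_succ, ih, mul_add,
      mul_one, sum_mul, sum_congr rfl hshift]
    simp [qbinom_of_lt, qbinom_of_neg]

theorem choose_two_add_choose_two_sub_mul (m j : ℕ) :
    ((m + 1).choose 2 + j.choose 2 : ℤ) - m * j = (m - j) * (m - j + 1) / 2 := by
  have h2 : (2 : ℤ) ∣ (m - j) * (m - j + 1) := (Int.even_mul_succ_self _).two_dvd
  apply Int.cast_injective (α := ℚ)
  rw [Int.cast_div h2 (by norm_num)]
  push_cast [Nat.cast_choose_two]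
  ring

theorem one_sub_inv_mul_prod_eq (m n : ℕ) {z : RatFunc ℚ} (hz : z ≠ 0) :
    (1 - z⁻¹) * ((∏ i ∈ range m, (1 - z * q ^ (i + 1))) * ∏ i ∈ range n, (1 - z⁻¹ * q ^ (i + 1))) =
      (-z) ^ m * q ^ (m + 1).choose 2 * ∏ i ∈ range (m + n + 1), (1 - (z * q ^ m)⁻¹ * q ^ i) := by
  have hq : q ≠ 0 := RatFunc.X_ne_zero
  have htail : ∏ i ∈ range (n + 1), (1 - (z * q ^ m)⁻¹ * q ^ (m + i)) =
      (1 - z⁻¹) * ∏ i ∈ range n, (1 - z⁻¹ * q ^ (i + 1)) := by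
    rw [prod_range_succ']
    simp_rw [pow_add, mul_inv, mul_assoc, inv_mul_cancel_left₀ (pow_ne_zero m hq)]
    ring
  have hhead : ∏ i ∈ range m, (1 - z * q ^ (i + 1)) =
      (-z) ^ m * q ^ (m + 1).choose 2 * ∏ i ∈ range m, (1 - (z * q ^ m)⁻¹ * q ^ i) := by
    have hfactor : ∀ i ∈ range m, 1 - z * q ^ (i + 1) =
        (-z * q ^ (i + 1)) * (1 - (z * q ^ m)⁻¹ * q ^ (m - 1 - i)) := by
      intro i hi
      have hm : q ^ (i + 1) * q ^ (m - 1 - i) = q ^ m := by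
        rw [← pow_add]; congr 1; have := mem_range.1 hi; omega
      field_simp
      linear_combination -hm
    have hsum : ∑ i ∈ range m, (i + 1) = (m + 1).choose 2 := by
      rw [Nat.choose_two_right, ← sum_range_id, sum_range_succ']
      rfl
    rw [prod_congr rfl hfactor, prod_mul_distrib, prod_mul_distrib, prod_const, card_range,
      prod_pow_eq_pow_sum, hsum, prod_range_reflect (fun i => 1 - (z * q ^ m)⁻¹ * q ^ i) m]
  rw [add_assoc, prod_range_add, hhead, htail]
  ring

theorem macMahon_term (m n j : ℕ) {z : RatFunc ℚ} (hz : z ≠ 0) :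
    (-z) ^ m * q ^ (m + 1).choose 2 *
        (q ^ j.choose 2 * qbinom (m + n + 1) j * (-(z * q ^ m)⁻¹) ^ j) =
      (-1) ^ ((m : ℤ) - j) * q ^ (((m : ℤ) - j) * ((m : ℤ) - j + 1) / 2) * z ^ ((m : ℤ) - j) *
        qbinom (m + n + 1) ((n : ℤ) + 1 + ((m : ℤ) - j)) := by
  have hq : q ≠ 0 := RatFunc.X_ne_zero
  have hsign : (-1 : RatFunc ℚ) ^ ((m : ℤ) - j) = (-1) ^ m * (-1) ^ j := by
    rw [zpow_sub₀ (by norm_num), zpow_natCast, zpow_natCast, div_eq_mul_inv, ← inv_pow, inv_neg,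
      inv_one]
  have hpow : q ^ (((m : ℤ) - j) * ((m : ℤ) - j + 1) / 2) =
      q ^ (m + 1).choose 2 * q ^ j.choose 2 / (q ^ m) ^ j := by
    rw [← choose_two_add_choose_two_sub_mul, zpow_sub₀ hq, zpow_add₀ hq, ← pow_mul, ← Nat.cast_mul]
    simp only [zpow_natCast]
  rw [show (n : ℤ) + 1 + ((m : ℤ) - j) = ((m + n + 1 : ℕ) : ℤ) - j by push_cast; ring, qbinom_symm,
    hsign, hpow, zpow_sub₀ hz, zpow_natCast, zpow_natCast, neg_pow z, neg_pow (z * q ^ m)⁻¹,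
    mul_inv, mul_pow, inv_pow, inv_pow, ← pow_mul]
  field_simp

theorem macMahon (m n : ℕ) {z : RatFunc ℚ} (hz : z ≠ 0) :
    (1 - z⁻¹) * ((∏ i ∈ range m, (1 - z * q ^ (i + 1))) * ∏ i ∈ range n, (1 - z⁻¹ * q ^ (i + 1))) =
      ∑ k ∈ Icc (-(n : ℤ) - 1) m,
        (-1) ^ k * q ^ (k * (k + 1) / 2) * z ^ k * qbinom (m + n + 1) ((n : ℤ) + 1 + k) := by
  simp_rw [one_sub_inv_mul_prod_eq m n hz, sub_eq_add_neg (1 : RatFunc ℚ), ← neg_mul,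
    prod_one_add_mul_X_pow, mul_sum]
  refine sum_nbij' (fun j => (m : ℤ) - j) (fun k => ((m : ℤ) - k).toNat) ?_ ?_ ?_ ?_
    fun j _ => macMahon_term m n j hz
  all_goals intro j hj; simp only [mem_range, mem_Icc] at hj ⊢; omega

section ProdPoly

open Polynomial

/-- `z ^ n (zq;q)_m (z⁻¹q;q)_n`, a polynomial in `z`. -/
noncomputable def prodPoly (m n : ℕ) : (RatFunc ℚ)[X] :=
  (∏ i ∈ range m, (1 - C (q ^ (i + 1)) * X)) * ∏ i ∈ range n, (X - C (q ^ (i + 1)))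

theorem eval_prodPoly_div_pow (m n : ℕ) {z : RatFunc ℚ} (hz : z ≠ 0) :
    (prodPoly m n).eval z / z ^ n =
      (∏ i ∈ range m, (1 - z * q ^ (i + 1))) * ∏ i ∈ range n, (1 - z⁻¹ * q ^ (i + 1)) := by
  simp only [prodPoly, eval_mul, eval_prod, eval_sub, eval_one, eval_C, eval_X, mul_div_assoc]
  congr 1
  · exact prod_congr rfl fun i _ => by ring
  · rw [show z ^ n = ∏ _i ∈ range n, z by simp, ← prod_div_distrib]
    exact prod_congr rfl fun i _ => by field_simp

end ProdPoly

/-- The differentiation step in the proof of Theorem 2.1. Let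
`f(z) = (zq;q)_m (z⁻¹q;q)_n`. Then `(1 - z⁻¹) f(z)` equals MacMahon'\''s sum with `n`
replaced by `n+1` (an identity of Laurent polynomials in `z`, stated for all nonzero
`z` in `ℚ(q)`), and consequently (evaluating the `z`-derivative at `z = 1`)
`f(1) = (q;q)_m (q;q)_n = Σ_{k=-n-1}^{m} (-1)^k k q^{C(k+1,2)} [m+n+1, n+1+k]_q`. -/
theorem differentiation_step (m n : ℕ) :
    (∀ z : RatFunc ℚ, z ≠ 0 →
      (1 - z⁻¹) *
        ((∏ i ∈ Finset.range m, (1 - z * (RatFunc.X : RatFunc ℚ) ^ (i + 1))) *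
          (∏ i ∈ Finset.range n, (1 - z⁻¹ * (RatFunc.X : RatFunc ℚ) ^ (i + 1)))) =
        ∑ k ∈ Finset.Icc (-(n : ℤ) - 1) (m : ℤ),
          (-1 : RatFunc ℚ) ^ k * (RatFunc.X : RatFunc ℚ) ^ (k * (k + 1) / 2) * z ^ k *
            qbinom (m + n + 1) ((n : ℤ) + 1 + k)) ∧
    (∏ i ∈ Finset.range m, (1 - (1 : RatFunc ℚ) * (RatFunc.X : RatFunc ℚ) ^ (i + 1))) *
        (∏ i ∈ Finset.range n, (1 - (1 : RatFunc ℚ)⁻¹ * (RatFunc.X : RatFunc ℚ) ^ (i + 1))) =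
      ∑ k ∈ Finset.Icc (-(n : ℤ) - 1) (m : ℤ),
        (-1 : RatFunc ℚ) ^ k * (k : RatFunc ℚ) *
          (RatFunc.X : RatFunc ℚ) ^ (k * (k + 1) / 2) *
            qbinom (m + n + 1) ((n : ℤ) + 1 + k) := by
  refine ⟨fun z hz => macMahon m n hz, ?_⟩
  have hderiv := eval_one_eq_sum_mul_of_one_sub_inv_mul_eq (prodPoly m n) n (Icc (-(n : ℤ) - 1) m)
    (fun k => (-1) ^ k * q ^ (k * (k + 1) / 2) * qbinom (m + n + 1) ((n : ℤ) + 1 + k))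
    fun z hz => by
      rw [eval_prodPoly_div_pow m n hz, macMahon m n hz]
      exact sum_congr rfl fun k _ => by ring
  have hf1 := eval_prodPoly_div_pow m n one_ne_zero
  rw [one_pow, div_one, hderiv] at hf1
  rw [← hf1]
  exact sum_congr rfl fun k _ => by ring
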